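/- For odd n ≥ 5, eqdim(S_n) = 2n, with the set {a_i, c_i : i = 0,…,n−1} being a distance-equalizer set of minimum cardinality. -/

import Mathlib

/-- `S` is a distance-equalizer set of `G`. -/
def IsDistEqSet {V : Type*} (G : SimpleGraph V) (S : Set V) : Prop :=
  ∀ u v : V, u ∉ S → v ∉ S → u ≠ v → ∃ x ∈ S, G.dist u x = G.dist v x

/-- The equidistant dimension of `G`. -/
noncomputable def eqdim {V : Type*} (G : SimpleGraph V) : ℕ :=
  sInf {k | ∃ S : Finset V, IsDistEqSet G ↑S ∧ S.card = k}

/-- The convex polytope graph `S_n` on vertex layers a=0, b=1, c=2, d=3. -/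
def SGraph (n : ℕ) : SimpleGraph (Fin 4 × ZMod n) :=
  SimpleGraph.fromRel (fun x y =>
    (x.1 = y.1 ∧ y.2 = x.2 + 1) ∨
    (x.1 = 0 ∧ y.1 = 1 ∧ y.2 = x.2) ∨
    (x.1 = 1 ∧ y.1 = 2 ∧ y.2 = x.2) ∨
    (x.1 = 2 ∧ y.1 = 3 ∧ y.2 = x.2) ∨
    (x.1 = 0 ∧ y.1 = 1 ∧ x.2 = y.2 + 1))

/-!
Distances in `S_n` are given by an explicit formula `layerDist`, certified as the unique function
that vanishes at the base point, grows by at most one along edges and can be lowered by one along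
some edge at every other vertex. By the formula, two vertices on the `b`- and `d`-cycles are
equidistant from the `c`-vertex halfway between them, which exists because `n` is odd. Conversely,
`c_i` and `d_i` are at different distances from every vertex, and so are `a_i` and `b_{i+2}` by a
parity argument on the odd cycle; every distance-equalizer set therefore meets each of these `2n`
disjoint pairs.
-/

namespace SimpleGraph

variable {V : Type*} {G : SimpleGraph V}

theorem Walk.apply_le_apply_add_length (f : V → ℕ) (hf : ∀ x y, G.Adj x y → f y ≤ f x + 1)
    {a b : V} (p : G.Walk a b) : f b ≤ f a + p.length := by
  induction p with
  | nil => simp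
  | cons h _ ih =>
    have := hf _ _ h
    rw [Walk.length_cons]
    omega

theorem exists_walk_length_eq_of_descent {u : V} (f : V → ℕ) (hu : f u = 0)
    (hf : ∀ v, v ≠ u → ∃ w, G.Adj w v ∧ f w + 1 = f v) (v : V) :
    ∃ p : G.Walk u v, p.length = f v := by
  induction hk : f v generalizing v with
  | zero =>
    obtain rfl : v = u := by
      by_contra h
      obtain ⟨w, -, hw⟩ := hf v h
      omega
    exact ⟨Walk.nil, rfl⟩
  | succ k ih =>
    obtain ⟨w, hwv, hw⟩ := hf v (by rintro rfl; omega)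
    obtain ⟨p, hp⟩ := ih w (by omega)
    exact ⟨p.concat hwv, by rw [Walk.length_concat, hp]⟩

theorem dist_eq_of_forall_adj {u : V} (f : V → ℕ) (hu : f u = 0)
    (hlip : ∀ x y, G.Adj x y → f y ≤ f x + 1)
    (hdesc : ∀ v, v ≠ u → ∃ w, G.Adj w v ∧ f w + 1 = f v) (v : V) : G.dist u v = f v := by
  obtain ⟨p, hp⟩ := exists_walk_length_eq_of_descent f hu hdesc v
  obtain ⟨q, hq⟩ := p.reachable.exists_walk_length_eq_dist
  have := q.apply_le_apply_add_length f hlip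
  have := dist_le p
  omega

end SimpleGraph

lemma IsDistEqSet.mem_or_mem {V : Type*} {G : SimpleGraph V} {S : Set V} (hS : IsDistEqSet G S)
    {u v : V} (h : ∀ x, G.dist u x ≠ G.dist v x) : u ∈ S ∨ v ∈ S := by
  by_contra! huv
  obtain ⟨x, -, hx⟩ := hS u v huv.1 huv.2 (fun huv' => h u (by rw [huv']))
  exact h x hx

lemma eqdim_eq_card {V : Type*} {G : SimpleGraph V} {S₀ : Finset V} (h₀ : IsDistEqSet G S₀)
    (hmin : ∀ S : Finset V, IsDistEqSet G S → S₀.card ≤ S.card) : eqdim G = S₀.card :=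
  IsLeast.csInf_eq ⟨⟨S₀, h₀, rfl⟩, by rintro _ ⟨S, hS, rfl⟩; exact hmin S hS⟩

namespace ZMod

variable {n : ℕ}

lemma val_add_one_eq_or [NeZero n] (a : ZMod n) :
    (a + 1).val = a.val + 1 ∧ a.val + 1 < n ∨ (a + 1).val = 0 ∧ a.val + 1 = n := by
  rcases (Nat.succ_le_of_lt a.val_lt).lt_or_eq with h | h
  · left
    rw [val_add_of_lt, val_one'' (by omega)]
    · exact ⟨rfl, h⟩
    · rwa [val_one'' (by omega)]
  · right
    refine ⟨?_, h⟩
    rw [← natCast_zmod_val a, ← Nat.cast_succ, h, natCast_self, val_zero]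

lemma natAbs_valMinAbs_add_one_le (a : ZMod n) :
    (a + 1).valMinAbs.natAbs ≤ a.valMinAbs.natAbs + 1 := by
  have h1 : (1 : ZMod n).valMinAbs.natAbs ≤ 1 := by
    rcases eq_zero_or_neZero n with rfl | _
    · rfl
    · rw [valMinAbs_natAbs_eq_min, val_one_eq_one_mod]
      exact (min_le_left _ _).trans (Nat.mod_le _ _)
  exact (natAbs_valMinAbs_add_le a 1).trans ((Int.natAbs_add_le _ _).trans (by omega))

lemma natAbs_valMinAbs_le_add_one (a : ZMod n) :
    a.valMinAbs.natAbs ≤ (a + 1).valMinAbs.natAbs + 1 := by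
  have := natAbs_valMinAbs_add_one_le (-a - 1)
  rwa [sub_add_cancel, natAbs_valMinAbs_neg, show -a - 1 = -(a + 1) by ring,
    natAbs_valMinAbs_neg] at this

lemma natAbs_valMinAbs_sub_one_add_one_eq_or [NeZero n] {a : ZMod n} (ha : a ≠ 0) :
    (a - 1).valMinAbs.natAbs + 1 = a.valMinAbs.natAbs ∨
      (a + 1).valMinAbs.natAbs + 1 = a.valMinAbs.natAbs := by
  obtain ⟨b, rfl⟩ : ∃ b, a = b + 1 := ⟨a - 1, by ring⟩
  have hb := val_add_one_eq_or b
  have hb1 := val_add_one_eq_or (b + 1)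
  have : (b + 1).val ≠ 0 := by rwa [Ne, val_eq_zero]
  simp only [add_sub_cancel_right, valMinAbs_natAbs_eq_min]
  omega

/-- Write `|x|` for `x.valMinAbs.natAbs`. On an odd cycle, `|a + 2| = |a| - 1` only for `a = (n - 1) / 2`, and then `|a + 3| = |a| - 2`
(for `n = 3` this fails, as `a + 3 = a`). -/
lemma natAbs_valMinAbs_ne_one_add_min (hn : 5 ≤ n) (hodd : Odd n) (a : ZMod n) :
    a.valMinAbs.natAbs ≠ 1 + min (a + 2).valMinAbs.natAbs (a + 3).valMinAbs.natAbs := by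
  have : NeZero n := ⟨by omega⟩
  obtain ⟨t, ht⟩ := hodd
  have h0 := val_add_one_eq_or a
  have h1 := val_add_one_eq_or (a + 1)
  have h2 := val_add_one_eq_or (a + 2)
  rw [add_assoc, one_add_one_eq_two] at h1
  rw [add_assoc, two_add_one_eq_three] at h2
  simp only [valMinAbs_natAbs_eq_min]
  omega

lemma natAbs_valMinAbs_eq_of_eq_neg {a b : ZMod n} (h : a = -b) :
    a.valMinAbs.natAbs = b.valMinAbs.natAbs :=
  h ▸ natAbs_valMinAbs_neg b

lemma exists_add_self_eq (hodd : Odd n) (a : ZMod n) : ∃ k, k + k = a := by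
  obtain ⟨t, rfl⟩ := hodd
  refine ⟨((t + 1 : ℕ) : ZMod (2 * t + 1)) * a, ?_⟩
  have h := natCast_self (2 * t + 1)
  push_cast at h ⊢
  linear_combination a * h

end ZMod

namespace SGraph

variable {n : ℕ}

lemma adj_sub_iff {l l' : Fin 4} {k k' : ZMod n} (s : ZMod n) :
    (SGraph n).Adj (l, k - s) (l', k' - s) ↔ (SGraph n).Adj (l, k) (l', k') := by
  simp only [SGraph, SimpleGraph.fromRel_adj, ne_eq, Prod.mk.injEq, sub_left_inj,
    sub_add_eq_add_sub]

lemma adj_add_one (hn : 1 < n) (l : Fin 4) (k : ZMod n) : (SGraph n).Adj (l, k) (l, k + 1) := by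
  have : Fact (1 < n) := ⟨hn⟩
  simp [SGraph]

lemma adj_rung {l l' : Fin 4} (h : l.val + 1 = l'.val) (k : ZMod n) :
    (SGraph n).Adj (l, k) (l', k) := by
  fin_cases l <;> fin_cases l' <;> simp_all [SGraph]

lemma adj_diagonal (k : ZMod n) : (SGraph n).Adj (0, k + 1) (1, k) := by
  simp [SGraph]

/-- `layerDist w l m` is the distance from `(w, s)` to `(l, s + m)`. The vertex `a_i` lies
between `b_{i-1}` and `b_i`, whence the two candidate offsets when exactly one endpoint is on the
`a`-cycle. -/
def layerDist (w l : Fin 4) (m : ZMod n) : ℕ :=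
  if w = 0 then
    if l = 0 then m.valMinAbs.natAbs
    else l.val + min m.valMinAbs.natAbs (m + 1).valMinAbs.natAbs
  else if l = 0 then w.val + min m.valMinAbs.natAbs (m - 1).valMinAbs.natAbs
  else Nat.dist w l + m.valMinAbs.natAbs

lemma layerDist_add_one_le (w l : Fin 4) (m : ZMod n) :
    layerDist w l (m + 1) ≤ layerDist w l m + 1 ∧ layerDist w l m ≤ layerDist w l (m + 1) + 1 := by
  have h₀ := ZMod.natAbs_valMinAbs_add_one_le (m - 1)
  have h₁ := ZMod.natAbs_valMinAbs_le_add_one (m - 1)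
  have h₂ := ZMod.natAbs_valMinAbs_add_one_le m
  have h₃ := ZMod.natAbs_valMinAbs_le_add_one m
  have h₄ := ZMod.natAbs_valMinAbs_add_one_le (m + 1)
  have h₅ := ZMod.natAbs_valMinAbs_le_add_one (m + 1)
  simp only [sub_add_cancel] at h₀ h₁
  simp only [layerDist, add_sub_cancel_right]
  split_ifs <;> omega

lemma layerDist_rung_le (w : Fin 4) {l l' : Fin 4} (h : l.val + 1 = l'.val) (m : ZMod n) :
    layerDist w l' m ≤ layerDist w l m + 1 ∧ layerDist w l m ≤ layerDist w l' m + 1 := by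
  have h₀ := ZMod.natAbs_valMinAbs_add_one_le (m - 1)
  have h₁ := ZMod.natAbs_valMinAbs_le_add_one (m - 1)
  have h₂ := ZMod.natAbs_valMinAbs_add_one_le m
  have h₃ := ZMod.natAbs_valMinAbs_le_add_one m
  simp only [sub_add_cancel] at h₀ h₁
  fin_cases w <;> fin_cases l <;> fin_cases l' <;> simp_all [layerDist, Nat.dist] <;> omega

lemma layerDist_diagonal_le (w : Fin 4) (m : ZMod n) :
    layerDist w 1 m ≤ layerDist w 0 (m + 1) + 1 ∧ layerDist w 0 (m + 1) ≤ layerDist w 1 m + 1 := by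
  have h₂ := ZMod.natAbs_valMinAbs_add_one_le m
  have h₃ := ZMod.natAbs_valMinAbs_le_add_one m
  fin_cases w <;> simp [layerDist, Nat.dist] <;> omega

lemma layerDist_le_of_adj (w : Fin 4) {x y : Fin 4 × ZMod n} (h : (SGraph n).Adj x y) :
    layerDist w y.1 y.2 ≤ layerDist w x.1 x.2 + 1 := by
  obtain ⟨l, m⟩ := x
  obtain ⟨l', m'⟩ := y
  rw [SGraph, SimpleGraph.fromRel_adj] at h
  obtain ⟨-, (⟨rfl, rfl⟩ | ⟨rfl, rfl, rfl⟩ | ⟨rfl, rfl, rfl⟩ | ⟨rfl, rfl, rfl⟩ | ⟨rfl, rfl, rfl⟩) |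
    (⟨rfl, rfl⟩ | ⟨rfl, rfl, rfl⟩ | ⟨rfl, rfl, rfl⟩ | ⟨rfl, rfl, rfl⟩ | ⟨rfl, rfl, rfl⟩)⟩ := h
  · exact (layerDist_add_one_le w _ _).1
  · exact (layerDist_rung_le w rfl _).1
  · exact (layerDist_rung_le w rfl _).1
  · exact (layerDist_rung_le w rfl _).1
  · exact (layerDist_diagonal_le w _).1
  · exact (layerDist_add_one_le w _ _).2
  · exact (layerDist_rung_le w rfl _).2
  · exact (layerDist_rung_le w rfl _).2
  · exact (layerDist_rung_le w rfl _).2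
  · exact (layerDist_diagonal_le w _).2

lemma exists_layer_closer : ∀ w l : Fin 4, l ≠ w → l ≠ 0 → ¬(w = 0 ∧ l = 1) →
    ∃ l' : Fin 4, l' ≠ 0 ∧ (l'.val + 1 = l.val ∨ l.val + 1 = l'.val) ∧
      Nat.dist w l' + 1 = Nat.dist w l := by
  decide

lemma exists_adj_layerDist_add_one_eq (hn : 1 < n) {w l : Fin 4} {m : ZMod n}
    (h : (l, m) ≠ (w, 0)) :
    ∃ y, (SGraph n).Adj y (l, m) ∧ layerDist w y.1 y.2 + 1 = layerDist w l m := by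
  have : NeZero n := ⟨by omega⟩
  rcases eq_or_ne l w with rfl | hlw
  · have hm : m ≠ 0 := fun hm => h (by rw [hm])
    have hself : ∀ m' : ZMod n, layerDist l l m' = m'.valMinAbs.natAbs := by
      intro m'
      by_cases hl : l = 0 <;> simp [layerDist, hl]
    rcases ZMod.natAbs_valMinAbs_sub_one_add_one_eq_or hm with hd | hd
    · refine ⟨(l, m - 1), ?_, by rw [hself, hself, hd]⟩
      simpa using adj_add_one hn l (m - 1)
    · exact ⟨(l, m + 1), (adj_add_one hn l m).symm, by rw [hself, hself, hd]⟩
  rcases eq_or_ne l 0 with rfl | hl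
  · have hw : w ≠ 0 := hlw.symm
    have hw1 : 1 ≤ w.val := Nat.one_le_iff_ne_zero.2 (Fin.val_ne_iff.2 hw)
    rcases le_total m.valMinAbs.natAbs (m - 1).valMinAbs.natAbs with hle | hle
    · refine ⟨(1, m), (adj_rung rfl m).symm, ?_⟩
      simp [layerDist, hw, Nat.dist]
      omega
    · refine ⟨(1, m - 1), ?_, ?_⟩
      · simpa only [sub_add_cancel] using (adj_diagonal (n := n) (m - 1)).symm
      simp [layerDist, hw, Nat.dist]
      omega
  by_cases h01 : w = 0 ∧ l = 1
  · obtain ⟨rfl, rfl⟩ := h01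
    rcases le_total m.valMinAbs.natAbs (m + 1).valMinAbs.natAbs with hle | hle
    · exact ⟨(0, m), adj_rung rfl m, by simp [layerDist, hle, add_comm]⟩
    · exact ⟨(0, m + 1), adj_diagonal m, by simp [layerDist, hle, add_comm]⟩
  obtain ⟨l', hl', hadj, hd⟩ := exists_layer_closer w l hlw hl h01
  refine ⟨(l', m), hadj.elim (adj_rung · m) (adj_rung · m |>.symm), ?_⟩
  by_cases hw : w = 0 <;> simp [layerDist, hw, hl, hl', Nat.dist] at hd ⊢ <;> omega

theorem dist_eq (hn : 1 < n) (w l : Fin 4) (s k : ZMod n) :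
    (SGraph n).dist (w, s) (l, k) = layerDist w l (k - s) := by
  refine SimpleGraph.dist_eq_of_forall_adj (fun v => layerDist w v.1 (v.2 - s)) ?_ ?_ ?_ (l, k)
  · by_cases hw : w = 0 <;> simp [layerDist, hw]
  · rintro ⟨l, k⟩ ⟨l', k'⟩ h
    exact layerDist_le_of_adj w ((adj_sub_iff s).2 h)
  · rintro ⟨l, k⟩ hne
    have hne' : (l, k - s) ≠ (w, 0) := by simpa [sub_eq_zero] using hne
    obtain ⟨⟨l', m'⟩, hadj, hd⟩ := exists_adj_layerDist_add_one_eq hn hne'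
    refine ⟨(l', m' + s), ?_, by simpa using hd⟩
    rw [← adj_sub_iff s]
    simpa using hadj

theorem isDistEqSet_layer_zero_or_two (hn : 1 < n) (hodd : Odd n) :
    IsDistEqSet (SGraph n) {x | x.1 = 0 ∨ x.1 = 2} := by
  have hbd : ∀ l : Fin 4, ¬(l = 0 ∨ l = 2) → l ≠ 0 ∧ Nat.dist l 2 = 1 := by decide
  rintro ⟨l, i⟩ ⟨l', j⟩ hu hv -
  obtain ⟨hl, hl2⟩ := hbd l hu
  obtain ⟨hl', hl'2⟩ := hbd l' hv
  obtain ⟨k, hk⟩ := ZMod.exists_add_self_eq hodd (i + j)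
  refine ⟨(2, k), Or.inr rfl, ?_⟩
  have hsymm := ZMod.natAbs_valMinAbs_eq_of_eq_neg (show k - j = -(k - i) by linear_combination hk)
  rw [dist_eq hn, dist_eq hn]
  simp [layerDist, hl, hl', hl2, hl'2, hsymm]

lemma dist_two_ne_dist_three (hn : 1 < n) (i : ZMod n) (x : Fin 4 × ZMod n) :
    (SGraph n).dist (2, i) x ≠ (SGraph n).dist (3, i) x := by
  obtain ⟨l, k⟩ := x
  rw [dist_eq hn, dist_eq hn]
  fin_cases l <;> simp [layerDist, Nat.dist]

lemma dist_zero_ne_dist_one_add_two (hn : 5 ≤ n) (hodd : Odd n) (i : ZMod n)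
    (x : Fin 4 × ZMod n) : (SGraph n).dist (0, i) x ≠ (SGraph n).dist (1, i + 2) x := by
  obtain ⟨l, k⟩ := x
  rw [dist_eq (by omega), dist_eq (by omega)]
  by_cases hl : l = 0
  · have key := ZMod.natAbs_valMinAbs_ne_one_add_min hn hodd (i - k)
    rw [ZMod.natAbs_valMinAbs_eq_of_eq_neg (a := i - k) (b := k - i) (by ring),
      ZMod.natAbs_valMinAbs_eq_of_eq_neg (a := i - k + 2) (b := k - (i + 2)) (by ring),
      ZMod.natAbs_valMinAbs_eq_of_eq_neg (a := i - k + 3) (b := k - (i + 2) - 1) (by ring)] at key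
    simpa [layerDist, hl] using key
  · have key := ZMod.natAbs_valMinAbs_ne_one_add_min hn hodd (k - (i + 2))
    rw [show k - (i + 2) + 2 = k - i by ring, show k - (i + 2) + 3 = k - i + 1 by ring] at key
    have hl1 : 1 ≤ l.val := Nat.one_le_iff_ne_zero.2 (Fin.val_ne_iff.2 hl)
    simp only [layerDist, hl, if_true, if_false, one_ne_zero, Nat.dist]
    omega

/-- The pairs `{c_i, d_i}` and `{a_i, b_{i+2}}` partition the vertices, and each must meet `S`. -/
theorem two_mul_le_card (hn : 5 ≤ n) (hodd : Odd n) (S : Finset (Fin 4 × ZMod n))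
    (hS : IsDistEqSet (SGraph n) S) : 2 * n ≤ S.card := by
  have : NeZero n := ⟨by omega⟩
  let pair : Fin 4 × ZMod n → Bool × ZMod n := fun x =>
    if x.1 = 0 then (true, x.2) else if x.1 = 1 then (true, x.2 - 2) else (false, x.2)
  have hsurj : Set.SurjOn pair S (Finset.univ : Finset (Bool × ZMod n)) := by
    rintro ⟨_ | _, i⟩ -
    · rcases hS.mem_or_mem (dist_two_ne_dist_three (by omega) i) with h | h
      exacts [⟨_, h, by simp [pair]⟩, ⟨_, h, by simp [pair]⟩]
    · rcases hS.mem_or_mem (dist_zero_ne_dist_one_add_two hn hodd i) with h | h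
      exacts [⟨_, h, by simp [pair]⟩, ⟨_, h, by simp [pair]⟩]
  simpa [ZMod.card, mul_comm] using Finset.card_le_card_of_surjOn pair hsurj

end SGraph

theorem stmt18 (n : ℕ) (hn : 5 ≤ n) (hodd : Odd n) :
    IsDistEqSet (SGraph n) {x : Fin 4 × ZMod n | x.1 = 0 ∨ x.1 = 2} ∧
    ({x : Fin 4 × ZMod n | x.1 = 0 ∨ x.1 = 2}).ncard = 2 * n ∧
    eqdim (SGraph n) = 2 * n := by
  have : NeZero n := ⟨by omega⟩
  let A : Finset (Fin 4 × ZMod n) := {0, 2} ×ˢ Finset.univ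
  have hA : (A : Set (Fin 4 × ZMod n)) = {x | x.1 = 0 ∨ x.1 = 2} := by ext; simp [A]
  have hcard : A.card = 2 * n := by simp [A, ZMod.card]
  have hS := SGraph.isDistEqSet_layer_zero_or_two (by omega) hodd
  refine ⟨hS, by rw [← hA, Set.ncard_coe_finset, hcard], ?_⟩
  rw [← hcard]
  exact eqdim_eq_card (hA ▸ hS) fun S hS' => hcard ▸ SGraph.two_mul_le_card hn hodd S hS'
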